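/- arXiv:2112.08820 — 2 statements merged into one kernel-verified Lean document; each statement's English description precedes it below -/
import Mathlib

section
/- Let M be a commutative monoid with a zero (absorbing) element serving as basepoint, and let Mat_n^R(M) denote the set of n×n matrices with entries in M having at most one nonzero entry in each column. Then Mat_n^R(M) is closed under matrix multiplication (where the product (μμ')_{ik} equals μ_{ij}μ'_{jk} if there exists j with both μ_{ij} and μ'_{jk} nonzero, and zero otherwise), and forms a monoid under this multiplication. -/
open Classical

/-- A matrix is in `Mat_n^R(M)` when each column has at most one nonzero entry. -/
def ColCond {n : ℕ} {M : Type*} [Zero M] (μ : Matrix (Fin n) (Fin n) M) : Prop :=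
  ∀ j i i', μ i j ≠ 0 → μ i' j ≠ 0 → i = i'

/-- Product of matrices over a commutative monoid with zero:
`(μμ')_{ik} = μ_{ij}·μ'_{jk}` if there is a `j` with both entries nonzero, else `0`. -/
noncomputable def mulR {n : ℕ} {M : Type*} [CommMonoidWithZero M]
    (μ μ' : Matrix (Fin n) (Fin n) M) : Matrix (Fin n) (Fin n) M :=
  fun i k => if h : ∃ j, μ i j ≠ 0 ∧ μ' j k ≠ 0 then μ i h.choose * μ' h.choose k else 0

/-- The identity matrix. -/
def idR (n : ℕ) (M : Type*) [CommMonoidWithZero M] : Matrix (Fin n) (Fin n) M :=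
  fun i j => if i = j then 1 else 0

lemma mulR_eq_zero {n : ℕ} {M : Type*} [CommMonoidWithZero M]
    {μ μ' : Matrix (Fin n) (Fin n) M} {i k : Fin n}
    (h : ¬ ∃ j, μ i j ≠ 0 ∧ μ' j k ≠ 0) : mulR μ μ' i k = 0 :=
  dif_neg h

lemma mulR_ne_zero {n : ℕ} {M : Type*} [CommMonoidWithZero M] [NoZeroDivisors M]
    {μ μ' : Matrix (Fin n) (Fin n) M} {i k : Fin n} :
    mulR μ μ' i k ≠ 0 ↔ ∃ j, μ i j ≠ 0 ∧ μ' j k ≠ 0 := by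
  constructor
  · intro h
    by_contra h'
    exact h (mulR_eq_zero h')
  · intro h
    show (if h : ∃ j, μ i j ≠ 0 ∧ μ' j k ≠ 0 then μ i h.choose * μ' h.choose k else 0) ≠ 0
    rw [dif_pos h]
    exact mul_ne_zero h.choose_spec.1 h.choose_spec.2

lemma mulR_apply {n : ℕ} {M : Type*} [CommMonoidWithZero M]
    {μ μ' : Matrix (Fin n) (Fin n) M} (hμ' : ColCond μ') {i j k : Fin n}
    (hj : μ i j ≠ 0) (hk : μ' j k ≠ 0) : mulR μ μ' i k = μ i j * μ' j k := by
  have h : ∃ j, μ i j ≠ 0 ∧ μ' j k ≠ 0 := ⟨j, hj, hk⟩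
  show (if h : ∃ j, μ i j ≠ 0 ∧ μ' j k ≠ 0 then μ i h.choose * μ' h.choose k else 0)
      = μ i j * μ' j k
  rw [dif_pos h, hμ' k h.choose j h.choose_spec.2 hk]

/-- `Mat_n^R(M)` is closed under matrix multiplication and forms a
monoid under it (associativity and identity laws on matrices with at most one
nonzero entry per column). -/
theorem matR_monoid (n : ℕ) (M : Type*) [CommMonoidWithZero M] [NoZeroDivisors M] :
    (∀ μ μ' : Matrix (Fin n) (Fin n) M, ColCond μ → ColCond μ' → ColCond (mulR μ μ')) ∧
    ColCond (idR n M) ∧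
    (∀ μ μ' μ'' : Matrix (Fin n) (Fin n) M, ColCond μ → ColCond μ' → ColCond μ'' →
      mulR (mulR μ μ') μ'' = mulR μ (mulR μ' μ'')) ∧
    (∀ μ : Matrix (Fin n) (Fin n) M, ColCond μ → mulR (idR n M) μ = μ ∧ mulR μ (idR n M) = μ) := by
  have closed : ∀ μ μ' : Matrix (Fin n) (Fin n) M, ColCond μ → ColCond μ' →
      ColCond (mulR μ μ') := by
    intro μ μ' hμ hμ' k i i' hi hi'
    obtain ⟨j, hj1, hj2⟩ := mulR_ne_zero.1 hi
    obtain ⟨j', hj1', hj2'⟩ := mulR_ne_zero.1 hi'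
    have : j = j' := hμ' k j j' hj2 hj2'
    subst this
    exact hμ j i i' hj1 hj1'
  have idcol : ColCond (idR n M) := by
    intro j i i' hi hi'
    have h1 : i = j := by
      by_contra h; exact hi (if_neg h)
    have h2 : i' = j := by
      by_contra h; exact hi' (if_neg h)
    rw [h1, h2]
  refine ⟨closed, idcol, ?_, ?_⟩
  · intro μ μ' μ'' hμ hμ' hμ''
    funext i l
    by_cases hL : mulR (mulR μ μ') μ'' i l = 0
    · by_cases hR : mulR μ (mulR μ' μ'') i l = 0
      · rw [hL, hR]
      · obtain ⟨j, hj1, hj2⟩ := mulR_ne_zero.1 hR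
        obtain ⟨k, hk1, hk2⟩ := mulR_ne_zero.1 hj2
        exact absurd hL (mulR_ne_zero.2 ⟨k, mulR_ne_zero.2 ⟨j, hj1, hk1⟩, hk2⟩)
    · obtain ⟨k, hk1, hk2⟩ := mulR_ne_zero.1 hL
      obtain ⟨j, hj1, hj2⟩ := mulR_ne_zero.1 hk1
      rw [mulR_apply hμ'' hk1 hk2, mulR_apply hμ' hj1 hj2,
        mulR_apply (closed μ' μ'' hμ' hμ'') hj1 (mulR_ne_zero.2 ⟨k, hj2, hk2⟩),
        mulR_apply hμ'' hj2 hk2, mul_assoc]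
  · intro μ hμ
    constructor
    · funext i k
      by_cases h : μ i k = 0
      · rw [h]
        apply mulR_eq_zero
        rintro ⟨j, hj1, hj2⟩
        have : i = j := by by_contra hij; exact hj1 (if_neg hij)
        subst this
        exact hj2 h
      · have h1 : (1 : M) ≠ 0 := by
          intro h1
          exact h (by rw [← one_mul (μ i k), h1, zero_mul])
        have hid : idR n M i i ≠ 0 := by
          rw [idR, if_pos rfl]; exact h1
        rw [mulR_apply hμ hid h, show idR n M i i = 1 from if_pos rfl, one_mul]
    · funext i k
      by_cases h : μ i k = 0
      · rw [h]
        apply mulR_eq_zero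
        rintro ⟨j, hj1, hj2⟩
        have : j = k := by by_contra hjk; exact hj2 (if_neg hjk)
        subst this
        exact hj1 h
      · have h1 : (1 : M) ≠ 0 := by
          intro h1
          exact h (by rw [← one_mul (μ i k), h1, zero_mul])
        have hid : idR n M k k ≠ 0 := by
          rw [idR, if_pos rfl]; exact h1
        rw [mulR_apply idcol h hid, show idR n M k k = 1 from if_pos rfl, mul_one]
end

section
/- Let H be a Hilbert space, P an orthogonal projection on H, and U a bounded operator on H that is upper-triangular with respect to the decomposition H = (1−P)H ⊕ PH, i.e., PU(1−P) = 0. Write U₁₁ = (1−P)U(1−P) acting on (1−P)H, U₂₂ = PUP acting on PH, and U₁₂ = (1−P)UP. Then U is unitary if and only if: (1) U₁₁ is an isometry on (1−P)H; (2) U₂₂ is a coisometry on PH (i.e., U₂₂U₂₂* = 1); and (3) U₁₂ restricts to a partial isometry from ker(U₂₂) onto the orthogonal complement of the range of U₁₁ in (1−P)H, and vanishes on ker(U₂₂)^⊥. -/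
/-!
Write `K = ker U₂₂ ∩ PH`. Triangularity says that `U` maps `(1 - P)H` into itself, so `U*` maps
`PH` into itself. Under (1)–(3), split `x = q + k + m` with `q ∈ (1 - P)H`, `k ∈ K` and
`m ∈ PH ⊖ K`. Then `Ux = U₁₁q + U₁₂k + U₂₂m`; the three terms lie in `ran U₁₁`, in its orthogonal
complement inside `(1 - P)H`, and in `PH`, so they are mutually orthogonal, and each piece is
mapped isometrically: `m` because `U₂₂U₂₂* = P` makes `U₂₂` a partial isometry with initial space
`PH ⊖ K`. Hence `U` is an isometry. Its range contains `PH`, `ran U₁₁` and `U₁₂K`, and by (3) the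
closure of `U₁₂K` is what `ran U₁₁` leaves of `(1 - P)H`, so `U` is onto. The converse is a direct
computation, with `U₁₂K = U K` and `U*` mapping the complement of `ran U₁₁` in `(1 - P)H` onto `K`.
-/

open ContinuousLinearMap
open scoped InnerProductSpace

section General

variable {𝕜 E F : Type*} [RCLike 𝕜] [NormedAddCommGroup E] [InnerProductSpace 𝕜 E]
  [NormedAddCommGroup F] [InnerProductSpace 𝕜 F]

theorem ContinuousLinearMap.norm_map_add_of_inner_eq_zero (T : E →L[𝕜] F) {a b : E}
    (hab : ⟪a, b⟫_𝕜 = 0) (hTab : ⟪T a, T b⟫_𝕜 = 0) (ha : ‖T a‖ = ‖a‖) (hb : ‖T b‖ = ‖b‖) :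
    ‖T (a + b)‖ = ‖a + b‖ := by
  have h := norm_add_sq_eq_norm_sq_add_norm_sq_of_inner_eq_zero _ _ hTab
  rw [ha, hb, ← norm_add_sq_eq_norm_sq_add_norm_sq_of_inner_eq_zero _ _ hab, ← map_add] at h
  exact (mul_self_inj (norm_nonneg _) (norm_nonneg _)).1 h

variable [CompleteSpace E] [CompleteSpace F]

theorem ContinuousLinearMap.norm_map_of_mem_orthogonal_ker {T : E →L[𝕜] F}
    (hT : T ∘L adjoint T ∘L T = T) {x : E} (hx : x ∈ T.kerᗮ) : ‖T x‖ = ‖x‖ := by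
  have hfix : adjoint T (T x) = x := by
    have hker : x - adjoint T (T x) ∈ T.ker := by
      rw [LinearMap.mem_ker, coe_coe, map_sub, sub_eq_zero]
      exact congr($hT x).symm
    have hperp : x - adjoint T (T x) ∈ T.kerᗮ := by
      refine T.kerᗮ.sub_mem hx ?_
      rw [orthogonal_ker]
      exact Submodule.le_topologicalClosure _ ⟨T x, rfl⟩
    have h0 : x - adjoint T (T x) ∈ T.ker ⊓ T.kerᗮ := ⟨hker, hperp⟩
    rw [Submodule.inf_orthogonal_eq_bot, Submodule.mem_bot, sub_eq_zero] at h0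
    exact h0.symm
  have h := congrArg RCLike.re (adjoint_inner_right T x (T x))
  rw [hfix, inner_self_eq_norm_sq, inner_self_eq_norm_sq] at h
  exact (sq_eq_sq₀ (norm_nonneg _) (norm_nonneg _)).1 h.symm

theorem ContinuousLinearMap.comp_adjoint_eq_one {U : E →L[𝕜] F} (hU : adjoint U ∘L U = 1)
    (hrange : U.rangeᗮ = ⊥) : U ∘L adjoint U = 1 := by
  ext x
  have hw : U (adjoint U x) - x ∈ U.rangeᗮ := by
    rw [orthogonal_range, LinearMap.mem_ker, coe_coe, map_sub, ← comp_apply (adjoint U), hU,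
      one_apply_eq_self, sub_self]
  rw [hrange, Submodule.mem_bot, sub_eq_zero] at hw
  exact hw

end General

section Projection

variable {𝕜 H : Type*} [RCLike 𝕜] [NormedAddCommGroup H] [InnerProductSpace 𝕜 H] {P : H →L[𝕜] H}

theorem ContinuousLinearMap.mem_range_iff_of_isIdempotentElem (hP : IsIdempotentElem P) {x : H} :
    x ∈ P.range ↔ P x = x :=
  LinearMap.IsIdempotentElem.mem_range_iff hP.toLinearMap

theorem ContinuousLinearMap.range_one_sub_of_isIdempotentElem (hP : IsIdempotentElem P) :
    (1 - P).range = P.ker := by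
  simpa using (LinearMap.IsIdempotentElem.ker_eq_range_one_sub hP.toLinearMap).symm

theorem ContinuousLinearMap.one_sub_apply_mem_ker (hP : IsIdempotentElem P) (x : H) :
    (1 - P) x ∈ P.ker :=
  range_one_sub_of_isIdempotentElem hP ▸ ⟨x, rfl⟩

variable [CompleteSpace H]

theorem IsStarProjection.inner_eq_zero_of_mem_ker_of_mem_range (hP : IsStarProjection P) {a b : H}
    (ha : a ∈ P.ker) (hb : b ∈ P.range) : ⟪a, b⟫_𝕜 = 0 := by
  rw [← hP.isSelfAdjoint.isStarNormal.orthogonal_range] at ha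
  exact Submodule.inner_left_of_mem_orthogonal hb ha

end Projection

namespace UpperTriangular

variable {𝕜 H : Type*} [RCLike 𝕜] [NormedAddCommGroup H] [InnerProductSpace 𝕜 H]

/-- The paper's `ker U₂₂`, where `U₂₂ = PUP` is the compression of `U` to `range P`.
In lemma names, `corner` refers to `U₁₁ = (1 - P)U(1 - P)` and `offDiagonal` to
`U₁₂ = (1 - P)UP`. -/
def kerCompression (P U : H →L[𝕜] H) : Submodule 𝕜 H :=
  (P ∘L U ∘L P).ker ⊓ P.range

variable {P U : H →L[𝕜] H}

theorem mem_kerCompression_iff (hP : IsIdempotentElem P) {x : H} :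
    x ∈ kerCompression P U ↔ x ∈ P.range ∧ U x ∈ P.ker := by
  rw [kerCompression, Submodule.mem_inf, and_comm]
  refine and_congr_right fun hx => ?_
  simp [(mem_range_iff_of_isIdempotentElem hP).1 hx]

theorem isClosed_kerCompression (hP : IsIdempotentElem P) :
    IsClosed (kerCompression P U : Set H) :=
  (isClosed_ker _).inter hP.isClosed_range

theorem compression_eq_of_triangular (htri : P ∘L (U ∘L (1 - P)) = 0) :
    P ∘L U ∘L P = P ∘L U := by
  rw [comp_sub, comp_sub, one_def, comp_id, sub_eq_zero] at htri
  exact htri.symm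

theorem corner_eq_of_triangular (htri : P ∘L (U ∘L (1 - P)) = 0) :
    (1 - P) ∘L (U ∘L (1 - P)) = U ∘L (1 - P) := by
  rw [sub_comp, htri, sub_zero, one_def, id_comp]

theorem compression_apply_of_triangular (htri : P ∘L (U ∘L (1 - P)) = 0) (x : H) :
    P (U (P x)) = P (U x) :=
  congr($(compression_eq_of_triangular htri) x)

theorem map_mem_ker_of_triangular (htri : P ∘L (U ∘L (1 - P)) = 0) {x : H} (hx : x ∈ P.ker) :
    U x ∈ P.ker := by
  have h := congr($(compression_eq_of_triangular htri) x)
  rw [LinearMap.mem_ker, coe_coe] at hx ⊢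
  simpa [hx] using h.symm

theorem offDiagonal_apply_of_mem_kerCompression (hP : IsIdempotentElem P) {k : H}
    (hk : k ∈ kerCompression P U) : ((1 - P) ∘L (U ∘L P)) k = U k := by
  obtain ⟨hPk, hPUk⟩ := (mem_kerCompression_iff hP).1 hk
  simpa [(mem_range_iff_of_isIdempotentElem hP).1 hPk] using hPUk

theorem compression_apply_of_mem_orthogonal_kerCompression (hP : IsIdempotentElem P)
    (hoffZero : ∀ x ∈ (kerCompression P U)ᗮ, ((1 - P) ∘L (U ∘L P)) x = 0) {m : H}
    (hm : m ∈ P.range) (hmK : m ∈ (kerCompression P U)ᗮ) : (P ∘L U ∘L P) m = U m := by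
  have h := hoffZero m hmK
  have hPm := (mem_range_iff_of_isIdempotentElem hP).1 hm
  simp only [comp_apply, sub_apply, one_apply_eq_self, hPm, sub_eq_zero] at h ⊢
  exact h.symm

theorem map_mem_range_of_mem_orthogonal_kerCompression (hP : IsIdempotentElem P)
    (hoffZero : ∀ x ∈ (kerCompression P U)ᗮ, ((1 - P) ∘L (U ∘L P)) x = 0) {m : H}
    (hm : m ∈ P.range) (hmK : m ∈ (kerCompression P U)ᗮ) : U m ∈ P.range :=
  compression_apply_of_mem_orthogonal_kerCompression hP hoffZero hm hmK ▸ ⟨_, rfl⟩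

variable [CompleteSpace H]

theorem adjoint_compression_eq_of_triangular (hP : IsStarProjection P)
    (htri : P ∘L (U ∘L (1 - P)) = 0) : P ∘L adjoint U ∘L P = adjoint U ∘L P := by
  simpa [adjoint_comp, hP.isSelfAdjoint.adjoint_eq, comp_assoc] using
    congrArg adjoint (compression_eq_of_triangular htri)

theorem adjoint_compression (hP : IsSelfAdjoint P) :
    adjoint (P ∘L U ∘L P) = P ∘L adjoint U ∘L P := by
  simp only [adjoint_comp, hP.adjoint_eq, comp_assoc]

theorem compression_comp_adjoint_compression_of_comp_adjoint_eq_one (hP : IsStarProjection P)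
    (htri : P ∘L (U ∘L (1 - P)) = 0) (hU : U ∘L adjoint U = 1) :
    (P ∘L (U ∘L P)) ∘L (P ∘L (adjoint U ∘L P)) = P := by
  calc (P ∘L (U ∘L P)) ∘L (P ∘L (adjoint U ∘L P))
      = (P ∘L U) ∘L (adjoint U ∘L P) := by
        rw [compression_eq_of_triangular htri, adjoint_compression_eq_of_triangular hP htri]
    _ = P ∘L (U ∘L adjoint U) ∘L P := by simp only [comp_assoc]
    _ = P := by rw [hU, one_def, id_comp]; exact hP.isIdempotentElem.eq

theorem norm_offDiagonal_apply_of_mem_kerCompression (hP : IsIdempotentElem P)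
    (hU : adjoint U ∘L U = 1) {k : H} (hk : k ∈ kerCompression P U) :
    ‖((1 - P) ∘L (U ∘L P)) k‖ = ‖k‖ := by
  rw [offDiagonal_apply_of_mem_kerCompression hP hk]
  exact (norm_map_iff_adjoint_comp_self U).2 hU k

theorem offDiagonal_apply_eq_zero_of_mem_orthogonal (hP : IsStarProjection P)
    (htri : P ∘L (U ∘L (1 - P)) = 0) (hU : U ∘L adjoint U = 1) {x : H}
    (hx : x ∈ (kerCompression P U)ᗮ) : ((1 - P) ∘L (U ∘L P)) x = 0 := by
  have hadj : adjoint ((1 - P) ∘L (U ∘L P)) = P ∘L adjoint U ∘L (1 - P) := by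
    simp only [adjoint_comp, hP.isSelfAdjoint.adjoint_eq, hP.one_sub.isSelfAdjoint.adjoint_eq,
      comp_assoc]
  have hrange : (adjoint ((1 - P) ∘L (U ∘L P))).range ≤ kerCompression P U := by
    rintro _ ⟨y, rfl⟩
    rw [mem_kerCompression_iff hP.isIdempotentElem, hadj, coe_coe, comp_apply, comp_apply,
      LinearMap.mem_ker, coe_coe, compression_apply_of_triangular htri, ← comp_apply U, hU,
      one_apply_eq_self]
    exact ⟨⟨_, rfl⟩, one_sub_apply_mem_ker hP.isIdempotentElem y⟩
  have h := Submodule.orthogonal_le hrange hx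
  rwa [orthogonal_range, adjoint_adjoint, LinearMap.mem_ker] at h

theorem mem_orthogonal_range_corner_iff (hP : IsStarProjection P)
    (htri : P ∘L (U ∘L (1 - P)) = 0) {y : H} :
    y ∈ ((1 - P) ∘L (U ∘L (1 - P))).rangeᗮ ↔ adjoint U y ∈ P.range := by
  rw [corner_eq_of_triangular htri, orthogonal_range, LinearMap.mem_ker, adjoint_comp,
    hP.one_sub.isSelfAdjoint.adjoint_eq, mem_range_iff_of_isIdempotentElem hP.isIdempotentElem,
    coe_coe, comp_apply, sub_apply, one_apply_eq_self, sub_eq_zero, eq_comm]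

theorem map_offDiagonal_kerCompression_of_unitary (hP : IsStarProjection P)
    (htri : P ∘L (U ∘L (1 - P)) = 0) (hU : adjoint U ∘L U = 1) (hU' : U ∘L adjoint U = 1) :
    (kerCompression P U).map ((1 - P) ∘L (U ∘L P) : H →ₗ[𝕜] H) =
      ((1 - P) ∘L (U ∘L (1 - P))).rangeᗮ ⊓ (1 - P).range := by
  rw [range_one_sub_of_isIdempotentElem hP.isIdempotentElem]
  apply le_antisymm
  · rintro _ ⟨k, hk, rfl⟩
    rw [coe_coe, offDiagonal_apply_of_mem_kerCompression hP.isIdempotentElem hk, Submodule.mem_inf,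
      mem_orthogonal_range_corner_iff hP htri, ← comp_apply (adjoint U), hU, one_apply_eq_self]
    exact (mem_kerCompression_iff hP.isIdempotentElem).1 hk
  · rintro y ⟨hyA, hy⟩
    have hk : adjoint U y ∈ kerCompression P U := by
      rw [mem_kerCompression_iff hP.isIdempotentElem, ← comp_apply U, hU', one_apply_eq_self]
      exact ⟨(mem_orthogonal_range_corner_iff hP htri).1 hyA, hy⟩
    refine ⟨_, hk, ?_⟩
    rw [coe_coe, offDiagonal_apply_of_mem_kerCompression hP.isIdempotentElem hk,
      ← comp_apply U, hU', one_apply_eq_self]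

theorem topologicalClosure_map_offDiagonal_kerCompression_of_unitary (hP : IsStarProjection P)
    (htri : P ∘L (U ∘L (1 - P)) = 0) (hU : adjoint U ∘L U = 1) (hU' : U ∘L adjoint U = 1) :
    ((kerCompression P U).map ((1 - P) ∘L (U ∘L P) : H →ₗ[𝕜] H)).topologicalClosure =
      ((1 - P) ∘L (U ∘L (1 - P))).rangeᗮ ⊓ (1 - P).range := by
  rw [map_offDiagonal_kerCompression_of_unitary hP htri hU hU']
  exact IsClosed.submodule_topologicalClosure_eq <|
    (Submodule.isClosed_orthogonal _).inter hP.one_sub.isIdempotentElem.isClosed_range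

theorem compression_comp_adjoint_comp_compression (hP : IsStarProjection P)
    (hcoiso : (P ∘L (U ∘L P)) ∘L (P ∘L (adjoint U ∘L P)) = P) :
    (P ∘L U ∘L P) ∘L adjoint (P ∘L U ∘L P) ∘L (P ∘L U ∘L P) = P ∘L U ∘L P := by
  rw [adjoint_compression hP.isSelfAdjoint, ← comp_assoc (P ∘L U ∘L P), hcoiso, ← comp_assoc P P]
  exact congrArg (· ∘L U ∘L P) hP.isIdempotentElem.eq

theorem mem_orthogonal_ker_compression (hP : IsStarProjection P) {m : H} (hm : m ∈ P.range)
    (hmK : m ∈ (kerCompression P U)ᗮ) : m ∈ (P ∘L U ∘L P).kerᗮ := by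
  rw [Submodule.mem_orthogonal]
  intro v hv
  have hPv : P v ∈ kerCompression P U :=
    (mem_kerCompression_iff hP.isIdempotentElem).2 ⟨⟨v, rfl⟩, hv⟩
  rw [← (mem_range_iff_of_isIdempotentElem hP.isIdempotentElem).1 hm]
  calc ⟪v, P m⟫_𝕜 = ⟪P v, m⟫_𝕜 := (hP.isSelfAdjoint.isSymmetric v m).symm
    _ = 0 := Submodule.inner_right_of_mem_orthogonal hPv hmK

theorem norm_map_of_mem_orthogonal_kerCompression (hP : IsStarProjection P)
    (hcoiso : (P ∘L (U ∘L P)) ∘L (P ∘L (adjoint U ∘L P)) = P)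
    (hoffZero : ∀ x ∈ (kerCompression P U)ᗮ, ((1 - P) ∘L (U ∘L P)) x = 0) {m : H}
    (hm : m ∈ P.range) (hmK : m ∈ (kerCompression P U)ᗮ) : ‖U m‖ = ‖m‖ := by
  rw [← compression_apply_of_mem_orthogonal_kerCompression hP.isIdempotentElem hoffZero hm hmK]
  exact norm_map_of_mem_orthogonal_ker (compression_comp_adjoint_comp_compression hP hcoiso)
    (mem_orthogonal_ker_compression hP hm hmK)

theorem exists_add_eq_of_mem_range (hP : IsIdempotentElem P) {p : H} (hp : p ∈ P.range) :
    ∃ k ∈ kerCompression P U, ∃ m ∈ P.range ⊓ (kerCompression P U)ᗮ, k + m = p := by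
  have := (isClosed_kerCompression (U := U) hP).completeSpace_coe
  have hk := (kerCompression P U).starProjection_apply_mem p
  exact ⟨_, hk, _, ⟨P.range.sub_mem hp hk.2, Submodule.sub_starProjection_mem_orthogonal p⟩,
    add_sub_cancel _ _⟩

theorem norm_map_of_mem_range (hP : IsStarProjection P)
    (hcoiso : (P ∘L (U ∘L P)) ∘L (P ∘L (adjoint U ∘L P)) = P)
    (hoffIso : ∀ x ∈ kerCompression P U, ‖((1 - P) ∘L (U ∘L P)) x‖ = ‖x‖)
    (hoffZero : ∀ x ∈ (kerCompression P U)ᗮ, ((1 - P) ∘L (U ∘L P)) x = 0) {p : H}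
    (hp : p ∈ P.range) : ‖U p‖ = ‖p‖ := by
  obtain ⟨k, hk, m, ⟨hm, hmK⟩, rfl⟩ := exists_add_eq_of_mem_range (U := U) hP.isIdempotentElem hp
  have hUk : U k ∈ P.ker := ((mem_kerCompression_iff hP.isIdempotentElem).1 hk).2
  have hUm : U m ∈ P.range :=
    map_mem_range_of_mem_orthogonal_kerCompression hP.isIdempotentElem hoffZero hm hmK
  refine U.norm_map_add_of_inner_eq_zero (Submodule.inner_right_of_mem_orthogonal hk hmK)
    (hP.inner_eq_zero_of_mem_ker_of_mem_range hUk hUm) ?_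
    (norm_map_of_mem_orthogonal_kerCompression hP hcoiso hoffZero hm hmK)
  rw [← offDiagonal_apply_of_mem_kerCompression hP.isIdempotentElem hk]
  exact hoffIso k hk

theorem inner_map_eq_zero_of_mem_ker_of_mem_range (hP : IsStarProjection P)
    (htri : P ∘L (U ∘L (1 - P)) = 0)
    (hoffZero : ∀ x ∈ (kerCompression P U)ᗮ, ((1 - P) ∘L (U ∘L P)) x = 0)
    (hoffPerp : (kerCompression P U).map ((1 - P) ∘L (U ∘L P) : H →ₗ[𝕜] H) ≤
      ((1 - P) ∘L (U ∘L (1 - P))).rangeᗮ)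
    {a p : H} (ha : a ∈ P.ker) (hp : p ∈ P.range) : ⟪U a, U p⟫_𝕜 = 0 := by
  obtain ⟨k, hk, m, ⟨hm, hmK⟩, rfl⟩ := exists_add_eq_of_mem_range (U := U) hP.isIdempotentElem hp
  have hUa : U a ∈ ((1 - P) ∘L (U ∘L (1 - P))).range := by
    have ha' : P a = 0 := ha
    rw [corner_eq_of_triangular htri]
    exact ⟨a, by simp [ha']⟩
  have hUk : U k ∈ ((1 - P) ∘L (U ∘L (1 - P))).rangeᗮ := by
    rw [← offDiagonal_apply_of_mem_kerCompression hP.isIdempotentElem hk]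
    exact hoffPerp ⟨k, hk, rfl⟩
  have hUm : U m ∈ P.range :=
    map_mem_range_of_mem_orthogonal_kerCompression hP.isIdempotentElem hoffZero hm hmK
  rw [map_add, inner_add_right, Submodule.inner_right_of_mem_orthogonal hUa hUk,
    hP.inner_eq_zero_of_mem_ker_of_mem_range (map_mem_ker_of_triangular htri ha) hUm, add_zero]

theorem adjoint_comp_self_eq_one_of_triangular (hP : IsStarProjection P)
    (htri : P ∘L (U ∘L (1 - P)) = 0) (hcornerIso : ∀ x ∈ P.ker, ‖U x‖ = ‖x‖)
    (hcoiso : (P ∘L (U ∘L P)) ∘L (P ∘L (adjoint U ∘L P)) = P)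
    (hoffIso : ∀ x ∈ kerCompression P U, ‖((1 - P) ∘L (U ∘L P)) x‖ = ‖x‖)
    (hoffZero : ∀ x ∈ (kerCompression P U)ᗮ, ((1 - P) ∘L (U ∘L P)) x = 0)
    (hoffPerp : (kerCompression P U).map ((1 - P) ∘L (U ∘L P) : H →ₗ[𝕜] H) ≤
      ((1 - P) ∘L (U ∘L (1 - P))).rangeᗮ) :
    adjoint U ∘L U = 1 := by
  refine (norm_map_iff_adjoint_comp_self U).1 fun x => ?_
  have ha : (1 - P) x ∈ P.ker := one_sub_apply_mem_ker hP.isIdempotentElem x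
  have hp : P x ∈ P.range := ⟨x, rfl⟩
  have hx : (1 - P) x + P x = x := by simp
  rw [← hx]
  exact U.norm_map_add_of_inner_eq_zero (hP.inner_eq_zero_of_mem_ker_of_mem_range ha hp)
    (inner_map_eq_zero_of_mem_ker_of_mem_range hP htri hoffZero hoffPerp ha hp) (hcornerIso _ ha)
    (norm_map_of_mem_range hP hcoiso hoffIso hoffZero hp)

theorem range_le_range_of_triangular (hP : IsStarProjection P)
    (hcoiso : (P ∘L (U ∘L P)) ∘L (P ∘L (adjoint U ∘L P)) = P)
    (hoffZero : ∀ x ∈ (kerCompression P U)ᗮ, ((1 - P) ∘L (U ∘L P)) x = 0) :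
    P.range ≤ U.range := by
  rintro _ ⟨y, rfl⟩
  have hv : (P ∘L adjoint U ∘L P) y ∈ P.range := ⟨_, rfl⟩
  have hvK : (P ∘L adjoint U ∘L P) y ∈ (kerCompression P U)ᗮ := by
    refine Submodule.orthogonal_le (K₁ := kerCompression P U) inf_le_left ?_
    rw [orthogonal_ker, adjoint_compression hP.isSelfAdjoint]
    exact Submodule.le_topologicalClosure _ ⟨y, rfl⟩
  refine ⟨(P ∘L adjoint U ∘L P) y, ?_⟩
  rw [coe_coe,
    ← compression_apply_of_mem_orthogonal_kerCompression hP.isIdempotentElem hoffZero hv hvK,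
    ← comp_apply, hcoiso]
  rfl

theorem orthogonal_range_eq_bot_of_triangular (hP : IsStarProjection P)
    (htri : P ∘L (U ∘L (1 - P)) = 0)
    (hcoiso : (P ∘L (U ∘L P)) ∘L (P ∘L (adjoint U ∘L P)) = P)
    (hoffZero : ∀ x ∈ (kerCompression P U)ᗮ, ((1 - P) ∘L (U ∘L P)) x = 0)
    (hoffDense : ((1 - P) ∘L (U ∘L (1 - P))).rangeᗮ ⊓ (1 - P).range ≤
      ((kerCompression P U).map ((1 - P) ∘L (U ∘L P) : H →ₗ[𝕜] H)).topologicalClosure) :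
    U.rangeᗮ = ⊥ := by
  set M := (kerCompression P U).map ((1 - P) ∘L (U ∘L P) : H →ₗ[𝕜] H)
  have hMU : M ≤ U.range := by
    rintro _ ⟨k, hk, rfl⟩
    exact ⟨k, (offDiagonal_apply_of_mem_kerCompression hP.isIdempotentElem hk).symm⟩
  have hAU : ((1 - P) ∘L (U ∘L (1 - P))).range ≤ U.range := by
    rw [corner_eq_of_triangular htri]
    rintro _ ⟨z, rfl⟩
    exact ⟨(1 - P) z, rfl⟩
  rw [eq_bot_iff]
  intro w hw
  have hwQ : w ∈ (1 - P).range := by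
    rw [range_one_sub_of_isIdempotentElem hP.isIdempotentElem,
      ← hP.isSelfAdjoint.isStarNormal.orthogonal_range]
    exact Submodule.orthogonal_le (range_le_range_of_triangular hP hcoiso hoffZero) hw
  have hwM : w ∈ M.topologicalClosure := hoffDense ⟨Submodule.orthogonal_le hAU hw, hwQ⟩
  have hwM' : w ∈ M.topologicalClosureᗮ := by
    rw [Submodule.orthogonal_closure]
    exact Submodule.orthogonal_le hMU hw
  rw [← M.topologicalClosure.inf_orthogonal_eq_bot]
  exact ⟨hwM, hwM'⟩

end UpperTriangular

open UpperTriangular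

/-- let `P` be an orthogonal projection on a Hilbert space `H` and `U`
a bounded operator that is upper triangular for `H = (1-P)H ⊕ PH`, i.e. `PU(1-P) = 0`.
Then `U` is unitary iff: (1) `U₁₁ = (1-P)U(1-P)` is an isometry on `(1-P)H`;
(2) `U₂₂ = PUP` is a coisometry on `PH` (`U₂₂U₂₂* = 1`); (3) `U₁₂ = (1-P)UP` is a
partial isometry from `ker U₂₂` onto the cokernel of `U₁₁` (the orthogonal complement
of the range of `U₁₁` in `(1-P)H`), vanishing on `(ker U₂₂)ᗮ`. -/
theorem triangular_unitary_iff
    {H : Type*} [NormedAddCommGroup H] [InnerProductSpace ℂ H] [CompleteSpace H]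
    (P U : H →L[ℂ] H) (hP1 : P ∘L P = P) (hP2 : adjoint P = P)
    (htri : P ∘L (U ∘L (1 - P)) = 0) :
    (adjoint U ∘L U = 1 ∧ U ∘L adjoint U = 1) ↔
      ((∀ x : H, P x = 0 → ‖U x‖ = ‖x‖) ∧
       ((P ∘L (U ∘L P)) ∘L (P ∘L (adjoint U ∘L P)) = P) ∧
       ((∀ x ∈ LinearMap.ker (P ∘L (U ∘L P) : H →ₗ[ℂ] H) ⊓ LinearMap.range (P : H →ₗ[ℂ] H),
           ‖((1 - P) ∘L (U ∘L P)) x‖ = ‖x‖) ∧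
        (∀ x ∈ (LinearMap.ker (P ∘L (U ∘L P) : H →ₗ[ℂ] H) ⊓ LinearMap.range (P : H →ₗ[ℂ] H))ᗮ,
           ((1 - P) ∘L (U ∘L P)) x = 0) ∧
        (((LinearMap.ker (P ∘L (U ∘L P) : H →ₗ[ℂ] H) ⊓ LinearMap.range (P : H →ₗ[ℂ] H)).map
             ((1 - P) ∘L (U ∘L P) : H →ₗ[ℂ] H)).topologicalClosure =
           (LinearMap.range ((1 - P) ∘L (U ∘L (1 - P)) : H →ₗ[ℂ] H))ᗮ ⊓ LinearMap.range ((1 - P : H →L[ℂ] H) : H →ₗ[ℂ] H)))) := by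
  have hP : IsStarProjection P := ⟨hP1, hP2⟩
  constructor
  · rintro ⟨hU, hU'⟩
    exact ⟨fun x _ => (norm_map_iff_adjoint_comp_self U).2 hU x,
      compression_comp_adjoint_compression_of_comp_adjoint_eq_one hP htri hU',
      fun k hk => norm_offDiagonal_apply_of_mem_kerCompression hP.isIdempotentElem hU hk,
      fun x hx => offDiagonal_apply_eq_zero_of_mem_orthogonal hP htri hU' hx,
      topologicalClosure_map_offDiagonal_kerCompression_of_unitary hP htri hU hU'⟩
  · rintro ⟨hcornerIso, hcoiso, hoffIso, hoffZero, hoffDense⟩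
    have hoffPerp := (Submodule.le_topologicalClosure _).trans (hoffDense.le.trans inf_le_left)
    have hU :=
      adjoint_comp_self_eq_one_of_triangular hP htri hcornerIso hcoiso hoffIso hoffZero hoffPerp
    exact ⟨hU, comp_adjoint_eq_one hU
      (orthogonal_range_eq_bot_of_triangular hP htri hcoiso hoffZero hoffDense.ge)⟩
end
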